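/- Let SAFE, MSAFE, and CSAFE denote the classes of safe, msafe, and csafe quad-systems respectively. Then CSAFE ⊊ MSAFE ⊊ SAFE: every csafe quad-system is msafe, every msafe quad-system is safe, and both inclusions are strict. -/

import Mathlib

/-! ## Core formalization: quads, quad-systems, bridge rules, distributed chase,
    distributed interpretation structures, CCQ entailment and safety notions. -/

/-- A quad over elements of type `C`: context identifier, subject, predicate, object. -/
structure Quad (C : Type) where
  ctx : C
  s : C
  p : C
  o : C

/-- Terms over constants `C`, with variables indexed by naturals. -/
inductive Term (C : Type) : Type
  | var : ℕ → Term C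
  | const : C → Term C

/-- A quad pattern: a context identifier together with a triple pattern. -/
structure QuadPattern (C : Type) where
  ctx : C
  s : Term C
  p : Term C
  o : Term C

/-- Constants enriched with Skolem blank nodes: `sk i j w` is the Skolem blank node
generated by the bridge rule with identifier `i`, at its existential variable `j`,
from the instantiated frontier vector `w` (its origin vector). -/
inductive SConst (C : Type) : Type
  | base : C → SConst C
  | sk : ℕ → ℕ → List (SConst C) → SConst C

/-- Ground quads appearing in the distributed chase. -/
structure GQuad (C : Type) where
  ctx : C
  s : SConst C
  p : SConst C
  o : SConst C

def Term.inst {C : Type} (μ : ℕ → SConst C) : Term C → SConst C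
  | .var v => μ v
  | .const a => .base a

def QuadPattern.inst {C : Type} (μ : ℕ → SConst C) (q : QuadPattern C) : GQuad C :=
  ⟨q.ctx, q.s.inst μ, q.p.inst μ, q.o.inst μ⟩

/-- A forall-existential bridge rule: body and head are sets of quad patterns,
`frontier` is the vector `x⃗` of frontier variables and `exVars` the existential
variables `y⃗` of the head. -/
structure BridgeRule (C : Type) where
  id : ℕ
  body : List (QuadPattern C)
  head : List (QuadPattern C)
  frontier : List ℕ
  exVars : Finset ℕ

def Term.varsOf {C : Type} : Term C → Finset ℕ
  | .var v => {v}
  | .const _ => ∅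

def QuadPattern.varsOf {C : Type} (q : QuadPattern C) : Finset ℕ :=
  q.s.varsOf ∪ q.p.varsOf ∪ q.o.varsOf

def patsVars {C : Type} (l : List (QuadPattern C)) : Finset ℕ :=
  l.foldr (fun q s => q.varsOf ∪ s) ∅

/-- Well-formedness of a bridge rule of the form
`∀x⃗∀z⃗ (body(x⃗,z⃗) → ∃y⃗ head(x⃗,y⃗))`. -/
def BridgeRule.WF {C : Type} (r : BridgeRule C) : Prop :=
  (∀ v ∈ patsVars r.head, v ∉ r.exVars → v ∈ r.frontier) ∧
  (∀ v ∈ r.frontier, v ∈ patsVars r.body) ∧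
  (∀ v ∈ r.exVars, v ∉ patsVars r.body ∧ v ∉ r.frontier) ∧
  r.frontier.Nodup

/-- A quad-system: a quad-graph together with a set of bridge rules. -/
structure QuadSystem (C : Type) where
  quads : Set (Quad C)
  rules : Set (BridgeRule C)

/-- Well-formed quad-systems: finitely many quads and rules, well-formed bridge rules
with unique rule identifiers. -/
def QuadSystem.WF {C : Type} (QS : QuadSystem C) : Prop :=
  (∀ r ∈ QS.rules, r.WF) ∧
  (∀ r ∈ QS.rules, ∀ r' ∈ QS.rules, r.id = r'.id → r = r') ∧
  QS.quads.Finite ∧ QS.rules.Finite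

/-- Extension of an assignment mapping each existential variable of `r` to the
corresponding fresh Skolem blank node. -/
def skExt {C : Type} (r : BridgeRule C) (μ : ℕ → SConst C) : ℕ → SConst C :=
  fun v => if v ∈ r.exVars then SConst.sk r.id v (r.frontier.map μ) else μ v

def headSatisfied {C : Type} (r : BridgeRule C) (μ : ℕ → SConst C)
    (I : Set (GQuad C)) : Prop :=
  ∃ ν : ℕ → SConst C, (∀ v, v ∉ r.exVars → ν v = μ v) ∧ ∀ q ∈ r.head, q.inst ν ∈ I

/-- `(r, μ)` is applicable on `I` iff `body(r)[μ] ⊆ I` and no extension of `μ`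
satisfies the head in `I` (restricted chase). -/
def applicable {C : Type} (r : BridgeRule C) (μ : ℕ → SConst C)
    (I : Set (GQuad C)) : Prop :=
  (∀ q ∈ r.body, q.inst μ ∈ I) ∧ ¬ headSatisfied r μ I

/-- The result of applying assignment `μ` to bridge rule `r`. -/
def applyRule {C : Type} (r : BridgeRule C) (μ : ℕ → SConst C) : Set (GQuad C) :=
  {q | ∃ h ∈ r.head, q = h.inst (skExt r μ)}

def Quad.toGQuad {C : Type} (q : Quad C) : GQuad C :=
  ⟨q.ctx, .base q.s, .base q.p, .base q.o⟩

/-- One iteration of the distributed chase. -/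
def chaseStep {C : Type} (QS : QuadSystem C) (I : Set (GQuad C)) : Set (GQuad C) :=
  I ∪ {q | ∃ r ∈ QS.rules, ∃ μ : ℕ → SConst C, applicable r μ I ∧ q ∈ applyRule r μ}

/-- The state of the distributed chase after `n` iterations. -/
def dChaseAt {C : Type} (QS : QuadSystem C) : ℕ → Set (GQuad C)
  | 0 => Quad.toGQuad '' QS.quads
  | n + 1 => chaseStep QS (dChaseAt QS n)

/-- The distributed chase of a quad-system. -/
def dChase {C : Type} (QS : QuadSystem C) : Set (GQuad C) :=
  ⋃ n, dChaseAt QS n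

/-! ### Distributed interpretation structures and entailment -/

/-- A distributed interpretation structure: a common domain, a rigid interpretation of
constants, and for each context a set of triples holding in it. -/
structure Interp (C : Type) where
  Dom : Type
  constInt : C → Dom
  holds : C → Dom → Dom → Dom → Prop

def Term.eval {C : Type} (I : Interp C) (σ : ℕ → I.Dom) : Term C → I.Dom
  | .var v => σ v
  | .const a => I.constInt a

def Interp.satQP {C : Type} (I : Interp C) (σ : ℕ → I.Dom) (q : QuadPattern C) : Prop :=
  I.holds q.ctx (q.s.eval I σ) (q.p.eval I σ) (q.o.eval I σ)

def Interp.satQuad {C : Type} (I : Interp C) (q : Quad C) : Prop :=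
  I.holds q.ctx (I.constInt q.s) (I.constInt q.p) (I.constInt q.o)

def Interp.satRule {C : Type} (I : Interp C) (r : BridgeRule C) : Prop :=
  ∀ σ : ℕ → I.Dom, (∀ q ∈ r.body, I.satQP σ q) →
    ∃ σ' : ℕ → I.Dom, (∀ v, v ∉ r.exVars → σ' v = σ v) ∧ ∀ q ∈ r.head, I.satQP σ' q

def Interp.isModel {C : Type} (I : Interp C) (QS : QuadSystem C) : Prop :=
  (∀ q ∈ QS.quads, I.satQuad q) ∧ ∀ r ∈ QS.rules, I.satRule r

def QuadSystem.Consistent {C : Type} (QS : QuadSystem C) : Prop :=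
  ∃ I : Interp C, I.isModel QS

/-- A (boolean) contextualized conjunctive query: a conjunction of quad patterns,
all of whose variables are existentially quantified. -/
abbrev CCQ (C : Type) : Type := List (QuadPattern C)

def Interp.satCCQ {C : Type} (I : Interp C) (Q : CCQ C) : Prop :=
  ∃ σ : ℕ → I.Dom, ∀ q ∈ Q, I.satQP σ q

/-- CCQ entailment: every model of the quad-system satisfies the query. -/
def entailsCCQ {C : Type} (QS : QuadSystem C) (Q : CCQ C) : Prop :=
  ∀ I : Interp C, I.isModel QS → I.satCCQ Q

/-! ### Skolem blank nodes: descendants, origin rule ids, origin vectors,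
origin contexts, and the safety notions -/

def SConst.isSk {C : Type} : SConst C → Prop
  | .sk _ _ _ => True
  | .base _ => False

/-- `childOf k b`: `k` is a child of the Skolem blank node `b`,
i.e. `k` occurs in the origin vector of `b`. -/
def childOf {C : Type} (k b : SConst C) : Prop :=
  ∃ i j w, b = SConst.sk i j w ∧ k ∈ w

/-- `descOf k b`: `k` is a descendant of `b` (transitive closure of `childOf`). -/
def descOf {C : Type} : SConst C → SConst C → Prop :=
  Relation.TransGen childOf

def occursIn {C : Type} (b : SConst C) (q : GQuad C) : Prop :=
  q.s = b ∨ q.p = b ∨ q.o = b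

def inChase {C : Type} (QS : QuadSystem C) (b : SConst C) : Prop :=
  ∃ q ∈ dChase QS, occursIn b q

def appearsAt {C : Type} (QS : QuadSystem C) (b : SConst C) (n : ℕ) : Prop :=
  ∃ q ∈ dChaseAt QS n, occursIn b q

/-- The origin contexts of a constant: the contexts in which triples containing it
are first generated during the chase construction. -/
def originContexts {C : Type} (QS : QuadSystem C) (b : SConst C) : Set C :=
  {c | ∃ n, (∀ m, m < n → ¬ appearsAt QS b m) ∧
        ∃ q ∈ dChaseAt QS n, occursIn b q ∧ q.ctx = c}

/-- Isomorphism of two vectors of constants: a bijective renaming of blank nodes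
(fixing all non-blank constants) carrying one to the other. -/
def VecIso {C : Type} (v w : List (SConst C)) : Prop :=
  ∃ g : SConst C → SConst C, w = v.map g ∧ (∀ x : SConst C, ¬ x.isSk → g x = x) ∧
    Set.InjOn g {x | x ∈ v ∧ x.isSk}

/-- A quad-system is unsafe iff its dChase contains two distinct Skolem blank nodes,
one a descendant of the other, with the same origin rule id and isomorphic
origin vectors. -/
def QuadSystem.Unsafe {C : Type} (QS : QuadSystem C) : Prop :=
  ∃ i j w j' w', inChase QS (SConst.sk i j w) ∧ inChase QS (SConst.sk i j' w') ∧
    SConst.sk i j w ≠ SConst.sk i j' w' ∧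
    descOf (SConst.sk i j w) (SConst.sk i j' w') ∧ VecIso w w'

def QuadSystem.Safe {C : Type} (QS : QuadSystem C) : Prop := ¬ QS.Unsafe

/-- A quad-system is unmsafe iff its dChase contains two distinct Skolem blank nodes,
one a descendant of the other, with the same origin rule id. -/
def QuadSystem.Unmsafe {C : Type} (QS : QuadSystem C) : Prop :=
  ∃ i j w j' w', inChase QS (SConst.sk i j w) ∧ inChase QS (SConst.sk i j' w') ∧
    SConst.sk i j w ≠ SConst.sk i j' w' ∧
    descOf (SConst.sk i j w) (SConst.sk i j' w')

def QuadSystem.Msafe {C : Type} (QS : QuadSystem C) : Prop := ¬ QS.Unmsafe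

/-- A quad-system is uncsafe iff its dChase contains two distinct Skolem blank nodes,
one a descendant of the other, with the same origin contexts. -/
def QuadSystem.Uncsafe {C : Type} (QS : QuadSystem C) : Prop :=
  ∃ b b' : SConst C, b.isSk ∧ b'.isSk ∧ b ≠ b' ∧ inChase QS b ∧ inChase QS b' ∧
    descOf b b' ∧ originContexts QS b = originContexts QS b'

def QuadSystem.Csafe {C : Type} (QS : QuadSystem C) : Prop := ¬ QS.Uncsafe

/-! In a well-formed quad-system a Skolem node is new at a chase step only as the value of an
existential variable, because frontier values already occur in the matched body. Hence the origin
contexts of `sk i j w` are the contexts of the head patterns of rule `i` that contain `j`,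
whatever `w` is. If `sk i j w` descends from `sk i j' w'`, it also descends from `sk i j w'`,
which the same application of rule `i` generated, and the two share their origin contexts: an
unmsafe system is uncsafe. Unsafe trivially implies unmsafe, and two small systems with explicitly
computed dChase separate the classes. -/

section Chase

variable {C : Type} {QS : QuadSystem C}

lemma dChaseAt_monotone : Monotone (dChaseAt QS) :=
  monotone_nat_of_le_succ fun _ => Set.subset_union_left

lemma dChaseAt_subset_dChase (n : ℕ) : dChaseAt QS n ⊆ dChase QS :=
  Set.subset_iUnion (dChaseAt QS) n

lemma toGQuad_mem_dChase {q : Quad C} (hq : q ∈ QS.quads) : q.toGQuad ∈ dChase QS :=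
  dChaseAt_subset_dChase 0 ⟨q, hq, rfl⟩

lemma dChase_subset_of_closed {J : Set (GQuad C)} (hquads : Quad.toGQuad '' QS.quads ⊆ J)
    (hclosed : ∀ r ∈ QS.rules, ∀ μ, (∀ q ∈ r.body, q.inst μ ∈ J) → applyRule r μ ⊆ J) :
    dChase QS ⊆ J := by
  refine Set.iUnion_subset fun n => ?_
  induction n with
  | zero => exact hquads
  | succ n ih =>
    rintro q (hq | ⟨r, hr, μ, happ, hq⟩)
    · exact ih hq
    · exact hclosed r hr μ (fun p hp => ih (happ.1 p hp)) hq

lemma headSatisfied_dChase {r : BridgeRule C} {μ : ℕ → SConst C} (hr : r ∈ QS.rules)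
    (hbody : ∀ q ∈ r.body, q.inst μ ∈ dChase QS) : headSatisfied r μ (dChase QS) := by
  have hev : ∀ q ∈ r.body, ∀ᶠ n in Filter.atTop, q.inst μ ∈ dChaseAt QS n := by
    intro q hq
    obtain ⟨n, hn⟩ := Set.mem_iUnion.mp (hbody q hq)
    exact Filter.eventually_atTop.mpr ⟨n, fun m hm => dChaseAt_monotone hm hn⟩
  obtain ⟨n, hn⟩ := (Filter.eventually_all_finite r.body.finite_toSet |>.mpr hev).exists
  by_cases happ : applicable r μ (dChaseAt QS n)
  · refine ⟨skExt r μ, fun v hv => if_neg hv, fun h hh => ?_⟩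
    exact dChaseAt_subset_dChase (n + 1) (Or.inr ⟨r, hr, μ, happ, h, hh, rfl⟩)
  · obtain ⟨ν, hν, hhead⟩ := not_not.mp fun hns => happ ⟨hn, hns⟩
    exact ⟨ν, hν, fun h hh => dChaseAt_subset_dChase n (hhead h hh)⟩

end Chase

section Descendants

variable {C : Type}

lemma sizeOf_lt_of_descOf {k b : SConst C} (h : descOf k b) : sizeOf k < sizeOf b := by
  have hchild : ∀ {k b : SConst C}, childOf k b → sizeOf k < sizeOf b := by
    rintro k _ ⟨i, j, w, rfl, hk⟩
    have := List.sizeOf_lt_of_mem hk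
    simp only [SConst.sk.sizeOf_spec]
    omega
  induction h with
  | single h => exact hchild h
  | tail _ h ih => exact ih.trans (hchild h)

lemma descOf_irrefl (b : SConst C) : ¬ descOf b b :=
  fun h => lt_irrefl _ (sizeOf_lt_of_descOf h)

lemma descOf_sk_of_descOf_sk {k : SConst C} {i j i' j' : ℕ} {w : List (SConst C)}
    (h : descOf k (.sk i j w)) : descOf k (.sk i' j' w) := by
  obtain ⟨x, hkx, ⟨_, _, _, heq, hx⟩⟩ := Relation.TransGen.tail'_iff.mp h
  obtain ⟨rfl, rfl, rfl⟩ := SConst.sk.inj heq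
  exact Relation.TransGen.tail' hkx ⟨i', j', _, rfl, hx⟩

end Descendants

section OriginContexts

variable {C : Type} {QS : QuadSystem C}

lemma exists_first_appearance {b : SConst C} (hb : inChase QS b) :
    ∃ n, appearsAt QS b n ∧ ∀ m < n, ¬ appearsAt QS b m := by
  classical
  obtain ⟨q, hq, hocc⟩ := hb
  obtain ⟨n, hn⟩ := Set.mem_iUnion.mp hq
  have hex : ∃ n, appearsAt QS b n := ⟨n, q, hn, hocc⟩
  exact ⟨Nat.find hex, Nat.find_spec hex, fun m => Nat.find_min hex⟩

lemma originContexts_eq_of_first_appearance {b : SConst C} {n : ℕ}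
    (hn : appearsAt QS b n) (hmin : ∀ m < n, ¬ appearsAt QS b m) :
    originContexts QS b = {c | ∃ q ∈ dChaseAt QS n, occursIn b q ∧ q.ctx = c} := by
  ext c
  constructor
  · rintro ⟨n', hmin', q, hq, hocc, rfl⟩
    obtain rfl : n' = n := le_antisymm (not_lt.mp fun h => hmin' n h hn)
      (not_lt.mp fun h => hmin n' h ⟨q, hq, hocc⟩)
    exact ⟨q, hq, hocc, rfl⟩
  · exact fun hc => ⟨n, hmin, hc⟩

lemma originContexts_eq_singleton {b : SConst C} {c : C} (hb : inChase QS b)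
    (hctx : ∀ q ∈ dChase QS, q.ctx = c) : originContexts QS b = {c} := by
  obtain ⟨n, hn, hmin⟩ := exists_first_appearance hb
  rw [originContexts_eq_of_first_appearance hn hmin]
  obtain ⟨q, hq, hocc⟩ := hn
  refine Set.eq_singleton_iff_unique_mem.mpr ⟨⟨q, hq, hocc, hctx q ?_⟩, ?_⟩
  · exact dChaseAt_subset_dChase n hq
  · rintro _ ⟨q', hq', -, rfl⟩
    exact hctx q' (dChaseAt_subset_dChase n hq')

end OriginContexts

section Provenance

variable {C : Type}

lemma mem_patsVars {l : List (QuadPattern C)} {v : ℕ} :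
    v ∈ patsVars l ↔ ∃ h ∈ l, v ∈ h.varsOf := by
  induction l with
  | nil => simp [patsVars]
  | cons a l ih => simp [patsVars, ← ih]

lemma Term.mem_varsOf {t : Term C} {v : ℕ} : v ∈ t.varsOf ↔ t = .var v := by
  cases t <;> simp [Term.varsOf, eq_comm]

lemma occursIn_inst_of_mem_varsOf {h : QuadPattern C} {v : ℕ} (ν : ℕ → SConst C)
    (hv : v ∈ h.varsOf) : occursIn (ν v) (h.inst ν) := by
  rcases h with ⟨_, s, p, o⟩
  simp only [QuadPattern.varsOf, Finset.mem_union, Term.mem_varsOf] at hv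
  rcases hv with (rfl | rfl) | rfl <;> simp [occursIn, QuadPattern.inst, Term.inst]

lemma exists_mem_varsOf_of_occursIn_inst {b : SConst C} (hb : b.isSk) {h : QuadPattern C}
    {ν : ℕ → SConst C} (hocc : occursIn b (h.inst ν)) : ∃ v ∈ h.varsOf, ν v = b := by
  rcases h with ⟨_, s, p, o⟩
  cases b <;> cases s <;> cases p <;> cases o <;>
    simp_all [SConst.isSk, QuadPattern.varsOf, Term.varsOf, occursIn, QuadPattern.inst,
      Term.inst]

def BridgeRule.headContexts (r : BridgeRule C) (j : ℕ) : Set C :=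
  {c | ∃ h ∈ r.head, j ∈ h.varsOf ∧ h.ctx = c}

variable {QS : QuadSystem C} {i j : ℕ} {w : List (SConst C)}

lemma skExt_of_mem_exVars {r : BridgeRule C} {μ : ℕ → SConst C} (hj : j ∈ r.exVars) :
    skExt r μ j = .sk r.id j (r.frontier.map μ) :=
  if_pos hj

/-- Frontier values already occur in the matched body, so a Skolem node that is new at a
chase step can only be the value of an existential variable. -/
lemma exists_application_of_fresh {I : Set (GQuad C)}
    (hwf : QS.WF) (hfresh : ∀ q ∈ I, ¬ occursIn (.sk i j w) q) {q : GQuad C}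
    (hq : q ∈ chaseStep QS I) (hocc : occursIn (.sk i j w) q) :
    ∃ r ∈ QS.rules, ∃ μ, applicable r μ I ∧ r.id = i ∧ j ∈ r.exVars ∧ r.frontier.map μ = w ∧
      ∃ h ∈ r.head, j ∈ h.varsOf ∧ q = h.inst (skExt r μ) := by
  rcases hq with hq | ⟨r, hr, μ, happ, h, hh, rfl⟩
  · exact absurd hocc (hfresh q hq)
  obtain ⟨v, hv, hskv⟩ := exists_mem_varsOf_of_occursIn_inst (b := .sk i j w) trivial hocc
  have hvex : v ∈ r.exVars := by
    by_contra hvex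
    have hvfront := (hwf.1 r hr).1 v (mem_patsVars.mpr ⟨h, hh, hv⟩) hvex
    obtain ⟨b, hb, hvb⟩ := mem_patsVars.mp ((hwf.1 r hr).2.1 v hvfront)
    have hμv : μ v = .sk i j w := by rwa [skExt, if_neg hvex] at hskv
    exact hfresh _ (happ.1 b hb) (hμv ▸ occursIn_inst_of_mem_varsOf μ hvb)
  rw [skExt, if_pos hvex] at hskv
  obtain ⟨rfl, rfl, rfl⟩ := SConst.sk.inj hskv
  exact ⟨r, hr, μ, happ, rfl, hvex, rfl, h, hh, hv, rfl⟩

lemma exists_first_appearance_sk (hb : inChase QS (.sk i j w)) :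
    ∃ n, appearsAt QS (.sk i j w) (n + 1) ∧ ∀ m ≤ n, ¬ appearsAt QS (.sk i j w) m := by
  obtain ⟨n, hn, hmin⟩ := exists_first_appearance hb
  obtain _ | n := n
  · obtain ⟨_, ⟨q, -, rfl⟩, hocc⟩ := hn
    rcases hocc with h | h | h <;> cases h
  · exact ⟨n, hn, fun m hm => hmin m (Nat.lt_succ_of_le hm)⟩

lemma exists_application_of_inChase_sk (hwf : QS.WF) (hb : inChase QS (.sk i j w)) :
    ∃ r ∈ QS.rules, ∃ μ, r.id = i ∧ j ∈ r.exVars ∧ r.frontier.map μ = w ∧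
      (∃ h ∈ r.head, j ∈ h.varsOf) ∧ applyRule r μ ⊆ dChase QS := by
  obtain ⟨n, ⟨q, hq, hocc⟩, hmin⟩ := exists_first_appearance_sk hb
  obtain ⟨r, hr, μ, happ, hid, hjex, hmap, h, hh, hjh, -⟩ :=
    exists_application_of_fresh hwf (fun q hq hocc => hmin n le_rfl ⟨q, hq, hocc⟩) hq hocc
  exact ⟨r, hr, μ, hid, hjex, hmap, ⟨h, hh, hjh⟩,
    fun q hq => dChaseAt_subset_dChase (n + 1) (Or.inr ⟨r, hr, μ, happ, hq⟩)⟩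

lemma originContexts_sk_eq_headContexts (hwf : QS.WF) (hb : inChase QS (.sk i j w))
    {r : BridgeRule C} (hr : r ∈ QS.rules) (hid : r.id = i) :
    originContexts QS (.sk i j w) = r.headContexts j := by
  obtain ⟨n, hn, hmin⟩ := exists_first_appearance_sk hb
  have hfresh : ∀ q ∈ dChaseAt QS n, ¬ occursIn (.sk i j w) q :=
    fun q hq hocc => hmin n le_rfl ⟨q, hq, hocc⟩
  rw [originContexts_eq_of_first_appearance hn fun m hm => hmin m (Nat.lt_succ_iff.mp hm)]
  ext c
  constructor
  · rintro ⟨q, hq, hocc, rfl⟩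
    obtain ⟨r', hr', -, -, hid', -, -, h, hh, hjh, rfl⟩ :=
      exists_application_of_fresh hwf hfresh hq hocc
    obtain rfl := hwf.2.1 r' hr' r hr (hid'.trans hid.symm)
    exact ⟨h, hh, hjh, rfl⟩
  · rintro ⟨h, hh, hjh, rfl⟩
    obtain ⟨q, hq, hocc⟩ := hn
    obtain ⟨r', hr', μ, happ, rfl, hjex, rfl, -⟩ := exists_application_of_fresh hwf hfresh hq hocc
    obtain rfl := hwf.2.1 r hr r' hr' hid
    refine ⟨h.inst (skExt r μ), Or.inr ⟨r, hr, μ, happ, h, hh, rfl⟩, ?_, rfl⟩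
    exact skExt_of_mem_exVars hjex ▸ occursIn_inst_of_mem_varsOf _ hjh

/-- `.sk i j' w'` comes from an application of rule `i` with frontier vector `w'`, which also
produces `.sk i j w'`. -/
lemma inChase_sk_of_inChase_sk (hwf : QS.WF) {j' : ℕ} {w' : List (SConst C)}
    (hb : inChase QS (.sk i j w)) (hb' : inChase QS (.sk i j' w')) :
    inChase QS (.sk i j w') := by
  obtain ⟨r, hr, -, rfl, hjex, -, ⟨h, hh, hjh⟩, -⟩ := exists_application_of_inChase_sk hwf hb
  obtain ⟨r', hr', μ', hid', -, rfl, -, happly⟩ := exists_application_of_inChase_sk hwf hb'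
  obtain rfl := hwf.2.1 r' hr' r hr hid'
  refine ⟨h.inst (skExt r' μ'), happly ⟨h, hh, rfl⟩, ?_⟩
  exact skExt_of_mem_exVars hjex ▸ occursIn_inst_of_mem_varsOf _ hjh

end Provenance

theorem QuadSystem.Unsafe.unmsafe {C : Type} {QS : QuadSystem C} (h : QS.Unsafe) :
    QS.Unmsafe :=
  let ⟨i, j, w, j', w', hb, hb', hne, hdesc, _⟩ := h
  ⟨i, j, w, j', w', hb, hb', hne, hdesc⟩

theorem QuadSystem.Unmsafe.uncsafe {C : Type} {QS : QuadSystem C} (hwf : QS.WF)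
    (h : QS.Unmsafe) : QS.Uncsafe := by
  obtain ⟨i, j, w, j', w', hb, hb', -, hdesc⟩ := h
  obtain ⟨r, hr, -, hid, -⟩ := exists_application_of_inChase_sk hwf hb
  have hb'' : inChase QS (.sk i j w') := inChase_sk_of_inChase_sk hwf hb hb'
  have hdesc' : descOf (.sk i j w) (.sk i j w') := descOf_sk_of_descOf_sk hdesc
  refine ⟨.sk i j w, .sk i j w', trivial, trivial, fun he => descOf_irrefl _ (he ▸ hdesc'),
    hb, hb'', hdesc', ?_⟩
  rw [originContexts_sk_eq_headContexts hwf hb hr hid,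
    originContexts_sk_eq_headContexts hwf hb'' hr hid]

/- `r1 : (3,0,0,0) → ∃y (3,y,1,y)` and `r2 : (3,x,1,x) → ∃y (3,y,2,x)`: their two Skolem nodes
stem from different rules, but both first appear in context `3`. -/
namespace MsafeNotCsafe

def n1 : SConst ℕ := .sk 1 0 []
def n2 : SConst ℕ := .sk 2 1 [n1]

def r1 : BridgeRule ℕ :=
  ⟨1, [⟨3, .const 0, .const 0, .const 0⟩], [⟨3, .var 0, .const 1, .var 0⟩], [], {0}⟩
def r2 : BridgeRule ℕ :=
  ⟨2, [⟨3, .var 0, .const 1, .var 0⟩], [⟨3, .var 1, .const 2, .var 0⟩], [0], {1}⟩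

def QS : QuadSystem ℕ := ⟨{⟨3, 0, 0, 0⟩}, {r1, r2}⟩

def chase : Set (GQuad ℕ) :=
  {⟨3, .base 0, .base 0, .base 0⟩, ⟨3, n1, .base 1, n1⟩, ⟨3, n2, .base 2, n1⟩}

lemma wf : QS.WF := by
  refine ⟨?_, ?_, Set.finite_singleton _, (Set.finite_singleton r2).insert r1⟩
  · rintro r (rfl | rfl) <;>
      simp [BridgeRule.WF, patsVars, QuadPattern.varsOf, Term.varsOf, r1, r2]
  · rintro r (rfl | rfl) r' (rfl | rfl) h <;> first | rfl | simp [r1, r2] at h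

lemma dChase_subset : dChase QS ⊆ chase := by
  refine dChase_subset_of_closed ?_ ?_
  · simp [QS, chase, Quad.toGQuad]
  · rintro r (rfl | rfl) μ hbody q ⟨h, hh, rfl⟩ <;>
      simp only [r1, r2, List.mem_singleton] at hh hbody <;> subst hh
    · simp [chase, QuadPattern.inst, Term.inst, skExt, r1, n1]
    · simp [chase, QuadPattern.inst, Term.inst, n1, n2] at hbody
      simp [chase, QuadPattern.inst, Term.inst, skExt, r2, n1, n2, hbody]

lemma n1_mem_dChase : (⟨3, n1, .base 1, n1⟩ : GQuad ℕ) ∈ dChase QS := by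
  obtain ⟨ν, -, hhead⟩ := headSatisfied_dChase (QS := QS) (μ := fun _ => .base 0)
    (Or.inl rfl) (by simpa [r1, QuadPattern.inst, Term.inst, Quad.toGQuad]
      using toGQuad_mem_dChase (QS := QS) (Set.mem_singleton _))
  have hq := hhead _ (List.mem_singleton_self _)
  have hν : ν 0 = n1 := by
    simpa [chase, QuadPattern.inst, Term.inst, n1, n2] using dChase_subset hq
  simpa [QuadPattern.inst, Term.inst, hν] using hq

lemma n2_mem_dChase : (⟨3, n2, .base 2, n1⟩ : GQuad ℕ) ∈ dChase QS := by
  obtain ⟨ν, hν0, hhead⟩ := headSatisfied_dChase (QS := QS) (μ := fun _ => n1)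
    (Or.inr rfl) (by simpa [r2, QuadPattern.inst, Term.inst] using n1_mem_dChase)
  have hq := hhead _ (List.mem_singleton_self _)
  have hν0 : ν 0 = n1 := hν0 0 (by simp [r2])
  have hν1 : ν 1 = n2 := by
    simpa [chase, QuadPattern.inst, Term.inst, hν0, n1, n2] using dChase_subset hq
  simpa [QuadPattern.inst, Term.inst, hν0, hν1] using hq

lemma eq_n1_or_eq_n2 {b : SConst ℕ} (hb : inChase QS b) (hsk : b.isSk) : b = n1 ∨ b = n2 := by
  obtain ⟨q, hq, hocc⟩ := hb
  rcases dChase_subset hq with rfl | rfl | rfl <;> rcases hocc with rfl | rfl | rfl <;>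
    simp_all [SConst.isSk]

lemma msafe : QS.Msafe := by
  rintro ⟨i, j, w, j', w', hb, hb', hne, -⟩
  rcases eq_n1_or_eq_n2 hb trivial with h | h <;> rcases eq_n1_or_eq_n2 hb' trivial with h' | h' <;>
    simp_all [n1, n2]

lemma not_csafe : ¬ QS.Csafe := by
  have hctx : ∀ q ∈ dChase QS, q.ctx = 3 := by
    intro q hq
    rcases dChase_subset hq with rfl | rfl | rfl <;> rfl
  have h1 : inChase QS n1 := ⟨_, n1_mem_dChase, Or.inl rfl⟩
  have h2 : inChase QS n2 := ⟨_, n2_mem_dChase, Or.inl rfl⟩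
  refine fun hsafe => hsafe ⟨n1, n2, trivial, trivial, by simp [n1, n2], h1, h2,
    .single ⟨2, 1, [n1], rfl, List.mem_singleton_self _⟩, ?_⟩
  rw [originContexts_eq_singleton h1 hctx, originContexts_eq_singleton h2 hctx]

end MsafeNotCsafe

/- `r : (6,x₀,1,x₁) ∧ (6,x₁,2,x₂) → ∃y (6,y,1,x₂) ∧ (6,y,x₀,x₀)` fires twice, and its second
Skolem node `m2` descends from its first `m1`; the origin vectors `[0,4]` and `[m1,5]` are not
isomorphic because a renaming of blank nodes must fix the constant `0`. -/
namespace SafeNotMsafe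

def m1 : SConst ℕ := .sk 1 3 [.base 0, .base 4]
def m2 : SConst ℕ := .sk 1 3 [m1, .base 5]

def r : BridgeRule ℕ :=
  ⟨1, [⟨6, .var 0, .const 1, .var 1⟩, ⟨6, .var 1, .const 2, .var 2⟩],
    [⟨6, .var 3, .const 1, .var 2⟩, ⟨6, .var 3, .var 0, .var 0⟩], [0, 2], {3}⟩

def QS : QuadSystem ℕ := ⟨{⟨6, 0, 1, 3⟩, ⟨6, 3, 2, 4⟩, ⟨6, 4, 2, 5⟩}, {r}⟩

def chase : Set (GQuad ℕ) :=
  {⟨6, .base 0, .base 1, .base 3⟩, ⟨6, .base 3, .base 2, .base 4⟩, ⟨6, .base 4, .base 2, .base 5⟩,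
    ⟨6, m1, .base 1, .base 4⟩, ⟨6, m1, .base 0, .base 0⟩, ⟨6, m2, .base 1, .base 5⟩, ⟨6, m2, m1, m1⟩}

lemma wf : QS.WF := by
  refine ⟨?_, ?_, ((Set.finite_singleton _).insert _).insert _, Set.finite_singleton _⟩
  · rintro _ rfl
    simp [BridgeRule.WF, patsVars, QuadPattern.varsOf, Term.varsOf, r]
  · rintro _ rfl _ rfl _
    rfl

lemma dChase_subset : dChase QS ⊆ chase := by
  refine dChase_subset_of_closed ?_ ?_
  · simp [QS, chase, Quad.toGQuad, Set.insert_subset_iff]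
  · rintro _ rfl μ hbody q ⟨h, hh, rfl⟩
    simp only [r, List.mem_cons, List.not_mem_nil, or_false, forall_eq_or_imp, forall_eq] at hbody hh
    obtain ⟨h1, h2⟩ := hbody
    simp [chase, QuadPattern.inst, Term.inst, m1, m2] at h1 h2
    rcases h1 with ⟨h0, h1⟩ | ⟨h0, h1⟩ | ⟨-, h1⟩ <;> rcases h2 with ⟨h1', h2⟩ | ⟨h1', h2⟩ <;>
      rcases hh with rfl | rfl <;> simp_all [chase, QuadPattern.inst, Term.inst, skExt, r, m1, m2]

lemma m1_mem_dChase : (⟨6, m1, .base 1, .base 4⟩ : GQuad ℕ) ∈ dChase QS := by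
  obtain ⟨ν, hν, hhead⟩ := headSatisfied_dChase (QS := QS)
    (μ := fun v => .base ([0, 3, 4].getD v 0)) rfl (by
      rintro q (_ | ⟨_, _ | ⟨_, ⟨⟩⟩⟩)
      · exact toGQuad_mem_dChase (q := ⟨6, 0, 1, 3⟩) (by simp [QS])
      · exact toGQuad_mem_dChase (q := ⟨6, 3, 2, 4⟩) (by simp [QS]))
  have hq := hhead _ List.mem_cons_self
  have hν2 : ν 2 = .base 4 := hν 2 (by simp [r])
  have hν3 : ν 3 = m1 := by
    simpa [chase, QuadPattern.inst, Term.inst, hν2, m1, m2] using dChase_subset hq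
  simpa [QuadPattern.inst, Term.inst, hν2, hν3] using hq

lemma m2_mem_dChase : (⟨6, m2, .base 1, .base 5⟩ : GQuad ℕ) ∈ dChase QS := by
  obtain ⟨ν, hν, hhead⟩ := headSatisfied_dChase (QS := QS)
    (μ := fun v => [m1, .base 4, .base 5].getD v m1) rfl (by
      rintro q (_ | ⟨_, _ | ⟨_, ⟨⟩⟩⟩)
      · exact m1_mem_dChase
      · exact toGQuad_mem_dChase (q := ⟨6, 4, 2, 5⟩) (by simp [QS]))
  have hq := hhead _ List.mem_cons_self
  have hν2 : ν 2 = .base 5 := hν 2 (by simp [r])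
  have hν3 : ν 3 = m2 := by
    simpa [chase, QuadPattern.inst, Term.inst, hν2, m1, m2] using dChase_subset hq
  simpa [QuadPattern.inst, Term.inst, hν2, hν3] using hq

lemma descOf_m1_m2 : descOf m1 m2 :=
  .single ⟨1, 3, [m1, .base 5], rfl, List.mem_cons_self⟩

lemma not_msafe : ¬ QS.Msafe :=
  fun hsafe => hsafe ⟨1, 3, _, 3, _, ⟨_, m1_mem_dChase, Or.inl rfl⟩,
    ⟨_, m2_mem_dChase, Or.inl rfl⟩, by simp [m1], descOf_m1_m2⟩

lemma eq_m1_or_eq_m2 {b : SConst ℕ} (hb : inChase QS b) (hsk : b.isSk) : b = m1 ∨ b = m2 := by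
  obtain ⟨q, hq, hocc⟩ := hb
  rcases dChase_subset hq with rfl | rfl | rfl | rfl | rfl | rfl | rfl <;>
    rcases hocc with rfl | rfl | rfl <;> simp_all [SConst.isSk]

lemma not_vecIso : ¬ VecIso [.base 0, .base 4] [m1, .base 5] := by
  rintro ⟨g, hmap, hfix, -⟩
  have hg0 : g (.base 0) = .base 0 := hfix _ id
  simp [hg0, m1] at hmap

lemma safe : QS.Safe := by
  rintro ⟨i, j, w, j', w', hb, hb', hne, hdesc, hiso⟩
  rcases eq_m1_or_eq_m2 hb trivial with h | h <;> rcases eq_m1_or_eq_m2 hb' trivial with h' | h' <;>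
    rw [h, h'] at hne hdesc
  · exact hne rfl
  · simp only [m1, m2, SConst.sk.injEq] at h h'
    obtain ⟨-, -, rfl⟩ := h
    obtain ⟨-, -, rfl⟩ := h'
    exact not_vecIso hiso
  · exact descOf_irrefl _ (hdesc.trans descOf_m1_m2)
  · exact hne rfl

end SafeNotMsafe

theorem csafe_strictSubset_msafe_strictSubset_safe :
    (∀ (C : Type) (QS : QuadSystem C), QS.WF → QS.Csafe → QS.Msafe) ∧
    (∀ (C : Type) (QS : QuadSystem C), QS.WF → QS.Msafe → QS.Safe) ∧
    (∃ QS : QuadSystem ℕ, QS.WF ∧ QS.Msafe ∧ ¬ QS.Csafe) ∧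
    (∃ QS : QuadSystem ℕ, QS.WF ∧ QS.Safe ∧ ¬ QS.Msafe) :=
  ⟨fun _ _ hwf hcsafe hunmsafe => hcsafe (hunmsafe.uncsafe hwf),
    fun _ _ _ hmsafe hunsafe => hmsafe hunsafe.unmsafe,
    ⟨MsafeNotCsafe.QS, MsafeNotCsafe.wf, MsafeNotCsafe.msafe, MsafeNotCsafe.not_csafe⟩,
    ⟨SafeNotMsafe.QS, SafeNotMsafe.wf, SafeNotMsafe.safe, SafeNotMsafe.not_msafe⟩⟩
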